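/- arXiv:1706.00907 — 2 statements merged into one kernel-verified Lean document; each statement's English description precedes it below -/
import Mathlib

section
/- Fix a constant $c > 0$ and an integer $M^* \ge 2$. Define the sequence $(w_m)_{m=1}^{M^*}$ by $w_m = \max\{ (M^*-m-2)!/c^{M^*-m-2}, 1\}$ for $1 \le m \le M^*-2$ and $w_m = 1$ for $M^*-1 \le m \le M^*$. Then: (1) $w_m \ge w_{M^*} = 1$ for all $m$; (2) $\sum_{m=1}^{M^*} \frac{c^{M^*-m}}{(M^*-m)!} w_m \le e^c + c^2$; (3) $\sum_{m=1}^{M^*} w_m^{-1} \le e^c + 2$. -/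
open Finset

private lemma tele_eq (N : ℕ) :
    ∑ j ∈ range N, (1:ℝ)/((j+1)*(j+2)) = 1 - 1/(N+1) := by
  induction N with
  | zero => simp
  | succ n ih =>
      rw [Finset.sum_range_succ, ih]
      have h1 : ((n:ℝ)+1) ≠ 0 := by positivity
      have h2 : ((n:ℝ)+2) ≠ 0 := by positivity
      push_cast
      field_simp
      ring

private lemma tele_le (N : ℕ) :
    ∑ j ∈ range N, (1:ℝ)/((j+1)*(j+2)) ≤ 1 := by
  rw [tele_eq]
  have : (0:ℝ) ≤ 1/(N+1) := by positivity
  linarith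

/-- Properties of the weight sequence `w_m` used in the MLMC complexity analysis. -/
theorem stmt_1 (c : ℝ) (hc : 0 < c) (M : ℕ) (hM : 2 ≤ M) (w : ℕ → ℝ)
    (hw1 : ∀ m, 1 ≤ m → m ≤ M - 2 →
      w m = max ((Nat.factorial (M - m - 2) : ℝ) / c ^ (M - m - 2)) 1)
    (hw2 : ∀ m, M - 1 ≤ m → m ≤ M → w m = 1) :
    (∀ m ∈ Finset.Icc 1 M, w M ≤ w m) ∧ w M = 1 ∧
    (∑ m ∈ Finset.Icc 1 M, c ^ (M - m) / (Nat.factorial (M - m) : ℝ) * w m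
        ≤ Real.exp c + c ^ 2) ∧
    (∑ m ∈ Finset.Icc 1 M, (w m)⁻¹ ≤ Real.exp c + 2) := by
  obtain ⟨N, rfl⟩ : ∃ N, M = N + 2 := ⟨M - 2, by omega⟩
  have wM : w (N + 2) = 1 := hw2 _ (by omega) le_rfl
  have wM1 : w (N + 1) = 1 := hw2 _ (by omega) (by omega)
  -- value of w at N - j for j < N
  have hA : ∀ j, j < N → w (N - j) = max ((Nat.factorial j : ℝ) / c ^ j) 1 := by
    intro j hj
    have h1 : N + 2 - (N - j) - 2 = j := by omega
    have := hw1 (N - j) (by omega) (by omega)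
    rwa [h1] at this
  have hfacpos : ∀ j : ℕ, (0:ℝ) < (Nat.factorial j : ℝ) / c ^ j := by
    intro j
    have := Nat.factorial_pos j
    positivity
  -- Part 1
  have part1 : ∀ m ∈ Finset.Icc 1 (N + 2), w (N + 2) ≤ w m := by
    intro m hm
    rw [wM]
    simp only [Finset.mem_Icc] at hm
    rcases le_or_gt m N with h | h
    · rw [hw1 m (by omega) (by omega)]
      exact le_max_right _ _
    · rw [hw2 m (by omega) (by omega)]
  -- reindexing lemma
  have reindex : ∀ F : ℕ → ℝ,
      ∑ m ∈ Finset.Icc 1 (N + 2), F m = ∑ k ∈ range (N + 2), F (N + 2 - k) := by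
    intro F
    apply Finset.sum_nbij' (fun m => N + 2 - m) (fun k => N + 2 - k)
    · intro a ha; simp only [Finset.mem_Icc] at ha; simp only [Finset.mem_range]; omega
    · intro a ha; simp only [Finset.mem_range] at ha; simp only [Finset.mem_Icc]; omega
    · intro a ha; simp only [Finset.mem_Icc] at ha; omega
    · intro a ha; simp only [Finset.mem_range] at ha; omega
    · intro a ha; simp only [Finset.mem_Icc] at ha
      congr 1; omega
  -- exp bound
  have hexp : ∀ n : ℕ, ∑ k ∈ range n, c ^ k / (Nat.factorial k : ℝ) ≤ Real.exp c :=
    fun n => Real.sum_le_exp_of_nonneg hc.le n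
  constructor
  · exact part1
  refine ⟨wM, ?_, ?_⟩
  · -- Part 2
    rw [reindex (fun m => c ^ (N + 2 - m) / (Nat.factorial (N + 2 - m) : ℝ) * w m)]
    have hcongr : ∀ k ∈ range (N + 2),
        c ^ (N + 2 - (N + 2 - k)) / (Nat.factorial (N + 2 - (N + 2 - k)) : ℝ) * w (N + 2 - k)
          = c ^ k / (Nat.factorial k : ℝ) * w (N + 2 - k) := by
      intro k hk
      simp only [Finset.mem_range] at hk
      have : N + 2 - (N + 2 - k) = k := by omega
      rw [this]
    rw [Finset.sum_congr rfl hcongr]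
    rw [Finset.sum_range_succ' (fun k => c ^ k / (Nat.factorial k : ℝ) * w (N + 2 - k)),
        Finset.sum_range_succ']
    have key : ∀ j ∈ range N,
        c ^ (j + 1 + 1) / (Nat.factorial (j + 1 + 1) : ℝ) * w (N + 2 - (j + 1 + 1))
          ≤ c ^ (j + 1 + 1) / (Nat.factorial (j + 1 + 1) : ℝ)
            + c ^ 2 * ((1:ℝ)/((j+1)*(j+2))) := by
      intro j hj
      simp only [Finset.mem_range] at hj
      have hsub : N + 2 - (j + 1 + 1) = N - j := by omega
      rw [hsub, hA j hj]
      have hmax : max ((Nat.factorial j : ℝ) / c ^ j) 1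
          ≤ (Nat.factorial j : ℝ) / c ^ j + 1 :=
        max_le (by linarith) (by linarith [hfacpos j])
      have hpos : (0:ℝ) < c ^ (j + 1 + 1) / (Nat.factorial (j + 1 + 1) : ℝ) := by
        have := Nat.factorial_pos (j + 1 + 1)
        positivity
      calc c ^ (j + 1 + 1) / (Nat.factorial (j + 1 + 1) : ℝ) * max ((Nat.factorial j : ℝ) / c ^ j) 1
          ≤ c ^ (j + 1 + 1) / (Nat.factorial (j + 1 + 1) : ℝ)
            * ((Nat.factorial j : ℝ) / c ^ j + 1) := by
            exact mul_le_mul_of_nonneg_left hmax hpos.le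
        _ = c ^ (j + 1 + 1) / (Nat.factorial (j + 1 + 1) : ℝ)
            + c ^ 2 * ((1:ℝ)/((j+1)*(j+2))) := by
            have hfac : (Nat.factorial (j + 1 + 1) : ℝ)
                = ((j:ℝ) + 2) * (((j:ℝ) + 1) * (Nat.factorial j : ℝ)) := by
              rw [Nat.factorial_succ, Nat.factorial_succ]
              push_cast
              ring
            have hfj : (Nat.factorial j : ℝ) ≠ 0 := by
              exact_mod_cast (Nat.factorial_pos j).ne'
            have h1 : ((j:ℝ)+1) ≠ 0 := by positivity
            have h2 : ((j:ℝ)+2) ≠ 0 := by positivity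
            have hcne : c ≠ 0 := hc.ne'
            rw [hfac]
            field_simp
            ring
    have hsum1 : ∑ j ∈ range N,
        c ^ (j + 1 + 1) / (Nat.factorial (j + 1 + 1) : ℝ) * w (N + 2 - (j + 1 + 1))
          ≤ (∑ j ∈ range N, c ^ (j + 1 + 1) / (Nat.factorial (j + 1 + 1) : ℝ))
            + c ^ 2 * ∑ j ∈ range N, (1:ℝ)/((j+1)*(j+2)) := by
      rw [Finset.mul_sum, ← Finset.sum_add_distrib]
      exact Finset.sum_le_sum key
    have hexp2 : (∑ j ∈ range N, c ^ (j + 1 + 1) / (Nat.factorial (j + 1 + 1) : ℝ))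
        + c ^ 1 / (Nat.factorial 1 : ℝ) + c ^ 0 / (Nat.factorial 0 : ℝ) ≤ Real.exp c := by
      have := hexp (N + 2)
      rw [Finset.sum_range_succ' (fun k => c ^ k / (Nat.factorial k : ℝ)),
          Finset.sum_range_succ'] at this
      convert this using 2
    have htel : c ^ 2 * ∑ j ∈ range N, (1:ℝ)/((j+1)*(j+2)) ≤ c ^ 2 := by
      have := tele_le N
      nlinarith [sq_nonneg c]
    have hw0 : w (N + 2 - 0) = 1 := by simpa using wM
    have hw1' : w (N + 2 - (0 + 1)) = 1 := by simpa using wM1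
    simp only [hw0, hw1', mul_one]
    calc (∑ j ∈ range N,
          c ^ (j + 1 + 1) / (Nat.factorial (j + 1 + 1) : ℝ) * w (N + 2 - (j + 1 + 1)))
          + c ^ (0 + 1) / (Nat.factorial (0 + 1) : ℝ) + c ^ 0 / (Nat.factorial 0 : ℝ)
        ≤ ((∑ j ∈ range N, c ^ (j + 1 + 1) / (Nat.factorial (j + 1 + 1) : ℝ))
            + c ^ 2 * ∑ j ∈ range N, (1:ℝ)/((j+1)*(j+2)))
          + c ^ (0 + 1) / (Nat.factorial (0 + 1) : ℝ) + c ^ 0 / (Nat.factorial 0 : ℝ) := by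
          linarith [hsum1]
      _ ≤ Real.exp c + c ^ 2 := by
          have : c ^ (0 + 1) / (Nat.factorial (0 + 1) : ℝ) = c ^ 1 / (Nat.factorial 1 : ℝ) := by
            norm_num
          rw [this]
          linarith [hexp2, htel]
  · -- Part 3
    rw [reindex (fun m => (w m)⁻¹)]
    rw [Finset.sum_range_succ' (fun k => (w (N + 2 - k))⁻¹), Finset.sum_range_succ']
    have key : ∀ j ∈ range N,
        (w (N + 2 - (j + 1 + 1)))⁻¹ ≤ c ^ j / (Nat.factorial j : ℝ) := by
      intro j hj
      simp only [Finset.mem_range] at hj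
      have hsub : N + 2 - (j + 1 + 1) = N - j := by omega
      rw [hsub, hA j hj]
      have h1 : (Nat.factorial j : ℝ) / c ^ j ≤ max ((Nat.factorial j : ℝ) / c ^ j) 1 :=
        le_max_left _ _
      have h2 : (0:ℝ) < (Nat.factorial j : ℝ) / c ^ j := hfacpos j
      calc (max ((Nat.factorial j : ℝ) / c ^ j) 1)⁻¹
          ≤ ((Nat.factorial j : ℝ) / c ^ j)⁻¹ := by
            exact inv_anti₀ h2 h1
        _ = c ^ j / (Nat.factorial j : ℝ) := by
            rw [inv_div]
    have hsum : ∑ j ∈ range N, (w (N + 2 - (j + 1 + 1)))⁻¹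
        ≤ ∑ j ∈ range N, c ^ j / (Nat.factorial j : ℝ) := Finset.sum_le_sum key
    have hw0 : (w (N + 2 - 0))⁻¹ = 1 := by simp [wM]
    have hw1' : (w (N + 2 - (0 + 1)))⁻¹ = 1 := by
      have : N + 2 - (0 + 1) = N + 1 := by omega
      rw [this, wM1]; norm_num
    rw [hw0, hw1']
    linarith [hexp N, hsum]
end

section
/- Let $\epsilon \in (0, e^{-1})$, $M^* = \lfloor \log(\epsilon^{-1})\rfloor$, $L^* \le \log(\epsilon^{-1})$, and let $(w_m)_{m=1}^{M^*}$ satisfy $w_m \ge 1$ and $\sum_{m=1}^{M^*} w_m^{-1} \le K$. Set $\epsilon_m^2 = w_m \epsilon^2$ and $N_{m,\ell} = \lceil \epsilon_m^{-2}(L^*+1) h_\ell\rceil$ with $h_\ell = T2^{-\ell}$, $T \le 1/2$. Then the total cost $C = \sum_{\ell=0}^{L^*} h_\ell^{-1} N_{1,\ell} + \sum_{m=2}^{M^*}\sum_{\ell=0}^{L^*} h_\ell^{-1} N_{m,\ell} \sum_{\ell'=0}^{L^*} N_{m-1,\ell'}$ satisfies $C \le c\, \epsilon^{-4} |\log \epsilon|^3$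 for a constant $c$ independent of $\epsilon$. -/
/-!
Bounding every ceiling by `x + 1`, the level sums of step `m` satisfy
`∑_ℓ h_ℓ⁻¹ N_{m,ℓ} ≤ (L*+1)² ε⁻² w_m⁻¹ + 2T⁻¹2^{L*}` and `∑_ℓ N_{m,ℓ} ≤ 2T(L*+1) ε⁻² w_m⁻¹ + L* + 1`,
where `2^{L*} ≤ ε⁻¹` and `L* + 1 ≤ 2|log ε|`. In the product of the two bounds every term but one
carries a factor `w_m⁻¹` or `w_{m-1}⁻¹`, so its sum over `m` is controlled by `∑ w_m⁻¹ ≤ K`; the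
remaining term `T⁻¹ ε⁻¹ (L*+1)` is summed over at most `M* ≤ |log ε|` values of `m`.
-/

open Finset

theorem two_pow_le_of_le_log {x : ℝ} (hx : 0 < x) {n : ℕ} (hn : (n : ℝ) ≤ Real.log x) :
    (2 : ℝ) ^ n ≤ x :=
  calc (2 : ℝ) ^ n ≤ Real.exp 1 ^ n := by
        gcongr; linarith [Real.add_one_le_exp 1]
    _ = Real.exp n := Real.exp_one_pow n
    _ ≤ Real.exp (Real.log x) := Real.exp_le_exp.2 hn
    _ = x := Real.exp_log hx

theorem pow_mul_pow_le_pow_mul_pow {u A : ℝ} (hu : 1 ≤ u) (hA : 1 ≤ A) {i j m n : ℕ}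
    (hi : i ≤ m) (hj : j ≤ n) : u ^ i * A ^ j ≤ u ^ m * A ^ n :=
  mul_le_mul (pow_le_pow_right₀ hu hi) (pow_le_pow_right₀ hA hj) (by positivity) (by positivity)

theorem sum_Icc_two_pred_le_sum_Icc_one {a : ℕ → ℝ} (ha : ∀ m, 0 ≤ a m) (M : ℕ) :
    ∑ m ∈ Icc 2 M, a (m - 1) ≤ ∑ m ∈ Icc 1 M, a m := by
  rw [← sum_image (g := (· - 1)) fun i hi j hj (h : i - 1 = j - 1) => by
    simp only [coe_Icc, Set.mem_Icc] at hi hj; omega]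
  refine sum_le_sum_of_subset_of_nonneg (fun i hi => ?_) fun i _ _ => ha i
  simp only [mem_image, mem_Icc] at hi ⊢
  omega

theorem sum_Icc_two_mul_pred_le {f g a : ℕ → ℝ} {M : ℕ} {α β γ δ K : ℝ}
    (ha₀ : ∀ m, 0 ≤ a m) (ha₁ : ∀ m, a m ≤ 1) (haK : ∑ m ∈ Icc 1 M, a m ≤ K)
    (hα : 0 ≤ α) (hβ : 0 ≤ β) (hγ : 0 ≤ γ) (hδ : 0 ≤ δ)
    (hf : ∀ m, f m ≤ α * a m + β) (hg₀ : ∀ m, 0 ≤ g m) (hg : ∀ m, g m ≤ γ * a m + δ) :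
    ∑ m ∈ Icc 2 M, f m * g (m - 1) ≤ (α * (γ + δ) + β * γ) * K + β * δ * M := by
  have hterm (m : ℕ) :
      f m * g (m - 1) ≤ α * (γ + δ) * a m + β * γ * a (m - 1) + β * δ := by
    have hprod := mul_le_mul (hf m) (hg (m - 1)) (hg₀ _) (by nlinarith [ha₀ m])
    have hcross : α * γ * a m * a (m - 1) ≤ α * γ * a m :=
      mul_le_of_le_one_right (by have := ha₀ m; positivity) (ha₁ (m - 1))
    nlinarith
  have hsum : ∑ m ∈ Icc 2 M, a m ≤ K :=
    (sum_le_sum_of_subset_of_nonneg (Icc_subset_Icc_left one_le_two) fun m _ _ => ha₀ m).trans haK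
  have hsum_pred : ∑ m ∈ Icc 2 M, a (m - 1) ≤ K :=
    (sum_Icc_two_pred_le_sum_Icc_one ha₀ M).trans haK
  have hcard : (#(Icc 2 M) : ℝ) ≤ M := by
    exact_mod_cast (Nat.card_Icc 2 M).trans_le (by omega)
  calc ∑ m ∈ Icc 2 M, f m * g (m - 1)
      ≤ ∑ m ∈ Icc 2 M, (α * (γ + δ) * a m + β * γ * a (m - 1) + β * δ) :=
        sum_le_sum fun m _ => hterm m
    _ = α * (γ + δ) * ∑ m ∈ Icc 2 M, a m + β * γ * ∑ m ∈ Icc 2 M, a (m - 1)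
          + β * δ * #(Icc 2 M) := by
      rw [sum_add_distrib, sum_add_distrib, ← mul_sum, ← mul_sum, sum_const, nsmul_eq_mul,
        mul_comm _ (β * δ)]
    _ ≤ (α * (γ + δ) + β * γ) * K + β * δ * M := by
      have h₁ := mul_le_mul_of_nonneg_left hsum (by positivity : 0 ≤ α * (γ + δ))
      have h₂ := mul_le_mul_of_nonneg_left hsum_pred (mul_nonneg hβ hγ)
      have h₃ := mul_le_mul_of_nonneg_left hcard (mul_nonneg hβ hδ)
      linarith

noncomputable def mesh (T : ℝ) (ℓ : ℕ) : ℝ := T * 2 ^ (-(ℓ : ℤ))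

theorem mesh_nonneg {T : ℝ} (hT : 0 ≤ T) (ℓ : ℕ) : 0 ≤ mesh T ℓ := by
  unfold mesh; positivity

theorem mesh_pos {T : ℝ} (hT : 0 < T) (ℓ : ℕ) : 0 < mesh T ℓ := by
  unfold mesh; positivity

theorem sum_range_mesh_le {T : ℝ} (hT : 0 ≤ T) (n : ℕ) : ∑ ℓ ∈ range n, mesh T ℓ ≤ 2 * T := by
  have hgeom := sum_geometric_two_le n
  simp only [one_div, inv_pow] at hgeom
  simp only [mesh, ← mul_sum, zpow_neg, zpow_natCast]
  nlinarith

theorem sum_range_inv_mesh_le {T : ℝ} (hT : 0 ≤ T) (n : ℕ) :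
    ∑ ℓ ∈ range (n + 1), (mesh T ℓ)⁻¹ ≤ 2 * T⁻¹ * 2 ^ n := by
  simp only [mesh, mul_inv, zpow_neg, zpow_natCast, inv_inv, ← mul_sum]
  rw [geom_sum_eq (by norm_num), pow_succ]
  have : 0 ≤ T⁻¹ := inv_nonneg.2 hT
  nlinarith

/- With `x = ε_m⁻² (L* + 1)`, `⌈x * mesh T ℓ⌉₊` is the sample size `N_{m,ℓ}`: `levelCost` is the
cost `∑_ℓ h_ℓ⁻¹ N_{m,ℓ}` of step `m` and `sampleCount` its number of particles `∑_ℓ N_{m,ℓ}`. -/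

noncomputable def levelCost (T x : ℝ) (L : ℕ) : ℝ :=
  ∑ ℓ ∈ range (L + 1), (mesh T ℓ)⁻¹ * (⌈x * mesh T ℓ⌉₊ : ℝ)

noncomputable def sampleCount (T x : ℝ) (L : ℕ) : ℝ :=
  ∑ ℓ ∈ range (L + 1), (⌈x * mesh T ℓ⌉₊ : ℝ)

theorem levelCost_le {T x : ℝ} (hT : 0 < T) (hx : 0 ≤ x) (L : ℕ) :
    levelCost T x L ≤ (L + 1) * x + 2 * T⁻¹ * 2 ^ L := by
  have hlevel (ℓ : ℕ) : (mesh T ℓ)⁻¹ * (⌈x * mesh T ℓ⌉₊ : ℝ) ≤ x + (mesh T ℓ)⁻¹ := by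
    have hh := mesh_pos hT ℓ
    calc (mesh T ℓ)⁻¹ * (⌈x * mesh T ℓ⌉₊ : ℝ) ≤ (mesh T ℓ)⁻¹ * (x * mesh T ℓ + 1) := by
          gcongr; exact (Nat.ceil_lt_add_one (by positivity)).le
      _ = x + (mesh T ℓ)⁻¹ := by field_simp
  calc levelCost T x L ≤ ∑ ℓ ∈ range (L + 1), (x + (mesh T ℓ)⁻¹) :=
        sum_le_sum fun ℓ _ => hlevel ℓ
    _ ≤ (L + 1) * x + 2 * T⁻¹ * 2 ^ L := by
      rw [sum_add_distrib, sum_const, card_range, nsmul_eq_mul, Nat.cast_succ]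
      linarith [sum_range_inv_mesh_le hT.le L]

theorem sampleCount_le {T x : ℝ} (hT : 0 ≤ T) (hx : 0 ≤ x) (L : ℕ) :
    sampleCount T x L ≤ 2 * T * x + (L + 1) :=
  calc sampleCount T x L ≤ ∑ ℓ ∈ range (L + 1), (x * mesh T ℓ + 1) :=
        sum_le_sum fun ℓ _ => (Nat.ceil_lt_add_one (mul_nonneg hx (mesh_nonneg hT ℓ))).le
    _ ≤ 2 * T * x + (L + 1) := by
      rw [sum_add_distrib, ← mul_sum, sum_const, card_range, nsmul_eq_mul, Nat.cast_succ]
      nlinarith [sum_range_mesh_le hT (L + 1)]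

theorem levelCost_weight_le {T ε w A : ℝ} {L : ℕ} (hT : 0 < T) (hw : 0 ≤ w)
    (hLA : (L : ℝ) + 1 ≤ 2 * A) (h2L : (2 : ℝ) ^ L ≤ ε⁻¹) :
    levelCost T ((w * ε ^ 2)⁻¹ * ((L : ℝ) + 1)) L ≤ 4 * A ^ 2 * ε⁻¹ ^ 2 * w⁻¹ + 2 * T⁻¹ * ε⁻¹ := by
  refine (levelCost_le hT (by positivity) L).trans ?_
  calc (L + 1) * ((w * ε ^ 2)⁻¹ * ((L : ℝ) + 1)) + 2 * T⁻¹ * 2 ^ L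
      = ((L : ℝ) + 1) ^ 2 * ε⁻¹ ^ 2 * w⁻¹ + 2 * T⁻¹ * 2 ^ L := by rw [mul_inv, inv_pow]; ring
    _ ≤ (2 * A) ^ 2 * ε⁻¹ ^ 2 * w⁻¹ + 2 * T⁻¹ * ε⁻¹ := by gcongr
    _ = 4 * A ^ 2 * ε⁻¹ ^ 2 * w⁻¹ + 2 * T⁻¹ * ε⁻¹ := by ring

theorem sampleCount_weight_le {T ε w A : ℝ} {L : ℕ} (hT : 0 ≤ T) (hw : 0 ≤ w)
    (hLA : (L : ℝ) + 1 ≤ 2 * A) :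
    sampleCount T ((w * ε ^ 2)⁻¹ * ((L : ℝ) + 1)) L ≤ 4 * T * A * ε⁻¹ ^ 2 * w⁻¹ + 2 * A := by
  refine (sampleCount_le hT (by positivity) L).trans ?_
  calc 2 * T * ((w * ε ^ 2)⁻¹ * ((L : ℝ) + 1)) + (L + 1)
      = 2 * T * ε⁻¹ ^ 2 * w⁻¹ * ((L : ℝ) + 1) + (L + 1) := by rw [mul_inv, inv_pow]; ring
    _ ≤ 2 * T * ε⁻¹ ^ 2 * w⁻¹ * (2 * A) + 2 * A := by gcongr
    _ = 4 * T * A * ε⁻¹ ^ 2 * w⁻¹ + 2 * A := by ring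

/-- Every monomial `u ^ i * A ^ j` of the bound has `i ≤ 4` and `j ≤ 3`. -/
theorem nested_cost_bound_le {T K u A a M : ℝ} (hT : 0 < T) (hK : 0 ≤ K) (hu : 1 ≤ u)
    (hA : 1 ≤ A) (ha : a ≤ 1) (hM : M ≤ A) :
    4 * A ^ 2 * u ^ 2 * a + 2 * T⁻¹ * u
        + ((4 * A ^ 2 * u ^ 2 * (4 * T * A * u ^ 2 + 2 * A) + 2 * T⁻¹ * u * (4 * T * A * u ^ 2)) * K
          + 2 * T⁻¹ * u * (2 * A) * M)
      ≤ (4 + 6 * T⁻¹ + (16 * T + 16) * K) * u ^ 4 * A ^ 3 := by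
  have hmono {i j : ℕ} (hi : i ≤ 4) (hj : j ≤ 3) := pow_mul_pow_le_pow_mul_pow hu hA hi hj
  have hT₀ : 0 ≤ T⁻¹ := by positivity
  have hexpand : 2 * T⁻¹ * u * (4 * T * A * u ^ 2) = 8 * (u ^ 3 * A ^ 1) := by field_simp; ring
  have h₁ : u ^ 2 * A ^ 2 * a ≤ u ^ 4 * A ^ 3 :=
    (mul_le_of_le_one_right (by positivity) ha).trans (hmono (by norm_num) (by norm_num))
  have h₂ := mul_le_mul_of_nonneg_left (hmono (i := 1) (j := 0) (by norm_num) (by norm_num)) hT₀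
  have h₃ := mul_le_mul_of_nonneg_left (hmono (i := 2) (j := 3) (by norm_num) (by norm_num)) hK
  have h₄ := mul_le_mul_of_nonneg_left (hmono (i := 3) (j := 1) (by norm_num) (by norm_num)) hK
  have h₅ : u * A * M ≤ u ^ 1 * A ^ 2 := by
    rw [pow_one, sq, ← mul_assoc]; gcongr
  have h₆ := mul_le_mul_of_nonneg_left (h₅.trans (hmono (by norm_num) (by norm_num))) hT₀
  rw [hexpand]
  simp only [pow_one, pow_zero, mul_one] at h₂ h₄ h₆
  linarith

theorem stmt_13_general (T K : ℝ) (hT : 0 < T) (hK : 0 < K) :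
    ∃ c : ℝ, ∀ ε : ℝ, 0 < ε → ε < (Real.exp 1)⁻¹ →
      ∀ L : ℕ, (L : ℝ) ≤ Real.log ε⁻¹ →
      ∀ w : ℕ → ℝ, (∀ m, 1 ≤ w m) →
      (∑ m ∈ Finset.Icc 1 ⌊Real.log ε⁻¹⌋₊, (w m)⁻¹ ≤ K) →
      (∑ ℓ ∈ Finset.range (L + 1), (T * 2 ^ (-(ℓ : ℤ)))⁻¹ *
            (⌈(w 1 * ε ^ 2)⁻¹ * ((L : ℝ) + 1) * (T * 2 ^ (-(ℓ : ℤ)))⌉₊ : ℝ))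
        + ∑ m ∈ Finset.Icc 2 ⌊Real.log ε⁻¹⌋₊, ∑ ℓ ∈ Finset.range (L + 1),
            (T * 2 ^ (-(ℓ : ℤ)))⁻¹ *
              (⌈(w m * ε ^ 2)⁻¹ * ((L : ℝ) + 1) * (T * 2 ^ (-(ℓ : ℤ)))⌉₊ : ℝ) *
              ∑ ℓ' ∈ Finset.range (L + 1),
                (⌈(w (m - 1) * ε ^ 2)⁻¹ * ((L : ℝ) + 1) * (T * 2 ^ (-(ℓ' : ℤ)))⌉₊ : ℝ)
      ≤ c * ε⁻¹ ^ 4 * |Real.log ε| ^ 3 := by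
  refine ⟨4 + 6 * T⁻¹ + (16 * T + 16) * K, fun ε hε hεe L hL w hw hwK => ?_⟩
  have hA : 1 ≤ Real.log ε⁻¹ :=
    ((Real.lt_log_iff_exp_lt (inv_pos.2 hε)).2 ((lt_inv_comm₀ hε (Real.exp_pos 1)).1 hεe)).le
  have hu : 1 ≤ ε⁻¹ := ((Real.log_pos_iff (inv_pos.2 hε).le).1 (by linarith)).le
  have hLA : (L : ℝ) + 1 ≤ 2 * Real.log ε⁻¹ := by linarith
  have hw₀ (m : ℕ) : 0 ≤ w m := zero_le_one.trans (hw m)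
  have hS (m : ℕ) := levelCost_weight_le hT (hw₀ m) hLA (two_pow_le_of_le_log (inv_pos.2 hε) hL)
  have hP (m : ℕ) := sampleCount_weight_le (ε := ε) hT.le (hw₀ m) hLA
  have hmid := sum_Icc_two_mul_pred_le (fun m => inv_nonneg.2 (hw₀ m))
    (fun m => inv_le_one_of_one_le₀ (hw m)) hwK (by positivity) (by positivity) (by positivity)
    (by positivity) hS (fun m => sum_nonneg fun ℓ _ => Nat.cast_nonneg _) hP
  simp only [← sum_mul]
  rw [← abs_neg, ← Real.log_inv, abs_of_pos (by linarith)]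
  exact (add_le_add (hS 1) hmid).trans (nested_cost_bound_le hT hK.le hu hA
    (inv_le_one_of_one_le₀ (hw 1)) (Nat.floor_le (by linarith)))

/-- Cost bound for the iterated MLMC particle system: with `M* = ⌊log ε⁻¹⌋`
Picard steps, `L* ≤ log ε⁻¹` levels, weights `w_m ≥ 1` with `∑ w_m⁻¹ ≤ K`,
sample sizes `N_{m,ℓ} = ⌈(w_m ε²)⁻¹ (L*+1) h_ℓ⌉` and `h_ℓ = T2^{-ℓ}` (`T ≤ 1/2`),
the total nested cost is of order `ε⁻⁴ |log ε|³`. -/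
theorem stmt_13 (T K : ℝ) (hT : 0 < T) (hT2 : T ≤ 1 / 2) (hK : 0 < K) :
    ∃ c : ℝ, ∀ ε : ℝ, 0 < ε → ε < (Real.exp 1)⁻¹ →
      ∀ L : ℕ, (L : ℝ) ≤ Real.log ε⁻¹ →
      ∀ w : ℕ → ℝ, (∀ m, 1 ≤ w m) →
      (∑ m ∈ Finset.Icc 1 ⌊Real.log ε⁻¹⌋₊, (w m)⁻¹ ≤ K) →
      (∑ ℓ ∈ Finset.range (L + 1), (T * 2 ^ (-(ℓ : ℤ)))⁻¹ *
            (⌈(w 1 * ε ^ 2)⁻¹ * ((L : ℝ) + 1) * (T * 2 ^ (-(ℓ : ℤ)))⌉₊ : ℝ))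
        + ∑ m ∈ Finset.Icc 2 ⌊Real.log ε⁻¹⌋₊, ∑ ℓ ∈ Finset.range (L + 1),
            (T * 2 ^ (-(ℓ : ℤ)))⁻¹ *
              (⌈(w m * ε ^ 2)⁻¹ * ((L : ℝ) + 1) * (T * 2 ^ (-(ℓ : ℤ)))⌉₊ : ℝ) *
              ∑ ℓ' ∈ Finset.range (L + 1),
                (⌈(w (m - 1) * ε ^ 2)⁻¹ * ((L : ℝ) + 1) * (T * 2 ^ (-(ℓ' : ℤ)))⌉₊ : ℝ)
      ≤ c * ε⁻¹ ^ 4 * |Real.log ε| ^ 3 :=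
  stmt_13_general T K hT hK
end
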